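/- arXiv:1208.6090 — 2 statements merged into one kernel-verified Lean document; each statement's English description precedes it below -/
import Mathlib

section
/- Assume that φ admits no adapted linear coordinate system and, after passing to a suitable linear coordinate system, that the coordinates x are linearly adapted to φ. If d = d(φ) < 2, then the critical exponent satisfies p'_c = 2d+2; equivalently, h^r(φ) = d(φ). -/
open MeasureTheory Filter Topology
open scoped FourierTransform ENNReal

noncomputable section

/-- First partial derivative in the first variable. -/
def pd1 (φ : ℝ × ℝ → ℝ) : ℝ × ℝ → ℝ := fun p => deriv (fun t => φ (t, p.2)) p.1

/-- First partial derivative in the second variable. -/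
def pd2 (φ : ℝ × ℝ → ℝ) : ℝ × ℝ → ℝ := fun p => deriv (fun t => φ (p.1, t)) p.2

/-- Mixed partial derivative ∂₁^a ∂₂^b. -/
def pderiv2 (a b : ℕ) (φ : ℝ × ℝ → ℝ) : ℝ × ℝ → ℝ := pd1^[a] (pd2^[b] φ)

/-- Taylor support of φ at the origin. -/
def TaylorSupp (φ : ℝ × ℝ → ℝ) : Set (ℕ × ℕ) := {α | pderiv2 α.1 α.2 φ (0, 0) ≠ 0}

def FiniteType (φ : ℝ × ℝ → ℝ) : Prop := (TaylorSupp φ).Nonempty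

/-- Newton polyhedron of φ at the origin. -/
def NewtonPolyhedron (φ : ℝ × ℝ → ℝ) : Set (ℝ × ℝ) :=
  convexHull ℝ (⋃ α ∈ TaylorSupp φ, {t : ℝ × ℝ | (α.1 : ℝ) ≤ t.1 ∧ (α.2 : ℝ) ≤ t.2})

/-- Newton distance. -/
def newtonDist (φ : ℝ × ℝ → ℝ) : ℝ := sInf {t : ℝ | (t, t) ∈ NewtonPolyhedron φ}

/-- A smooth local coordinate change at the origin. -/
def IsLocalCoordChange (g : ℝ × ℝ → ℝ × ℝ) : Prop :=
  g (0, 0) = (0, 0) ∧ ContDiffAt ℝ (⊤ : ℕ∞) g (0, 0) ∧ (fderiv ℝ g (0, 0)).det ≠ 0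

/-- Height of φ: supremum of Newton distances over all local coordinate systems. -/
def newtonHeight (φ : ℝ × ℝ → ℝ) : ℝ :=
  sSup {d : ℝ | ∃ g, IsLocalCoordChange g ∧ d = newtonDist (φ ∘ g)}

/-- Linear height of φ. -/
def linHeight (φ : ℝ × ℝ → ℝ) : ℝ :=
  sSup {d : ℝ | ∃ T : (ℝ × ℝ) ≃ₗ[ℝ] ℝ × ℝ, d = newtonDist (φ ∘ T)}

/-- The given coordinates are adapted to φ. -/
def IsAdaptedCoords (φ : ℝ × ℝ → ℝ) : Prop := newtonDist φ = newtonHeight φ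

/-- The given coordinates are linearly adapted to φ. -/
def IsLinAdaptedCoords (φ : ℝ × ℝ → ℝ) : Prop := newtonDist φ = linHeight φ

/-- There is no linear coordinate system adapted to φ. -/
def NoAdaptedLinearCoords (φ : ℝ × ℝ → ℝ) : Prop :=
  ∀ T : (ℝ × ℝ) ≃ₗ[ℝ] ℝ × ℝ, ¬ IsAdaptedCoords (φ ∘ T)

abbrev E3 := EuclideanSpace ℝ (Fin 3)

/-- The graph map of φ into ℝ³. -/
def graphMap (φ : ℝ × ℝ → ℝ) (x : ℝ × ℝ) : E3 :=
  (EuclideanSpace.equiv (Fin 3) ℝ).symm ![x.1, x.2, φ x]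

/-- The surface measure ρ dσ on the graph of φ. -/
def graphMeasure (φ : ℝ × ℝ → ℝ) (ρ : E3 → ℝ) : Measure E3 :=
  Measure.map (graphMap φ)
    ((volume : Measure (ℝ × ℝ)).withDensity fun x =>
      ENNReal.ofReal (ρ (graphMap φ x) * Real.sqrt (1 + (pd1 φ x) ^ 2 + (pd2 φ x) ^ 2)))

/-- L^p → L²(dμ) Fourier restriction estimate. -/
def RestrictionHolds (μ : Measure E3) (p : ℝ) : Prop :=
  ∃ C : ℝ, 0 < C ∧ ∀ f : SchwartzMap E3 ℂ,
    eLpNorm (𝓕 ⇑f) 2 μ ≤ ENNReal.ofReal C * eLpNorm (⇑f) (ENNReal.ofReal p) volume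



/-! ## Machinery -/
open scoped ContDiff
section Machinery

lemma pd1_congr_on {s : Set (ℝ×ℝ)} (hs : IsOpen s) {u v : ℝ×ℝ → ℝ}
    (h : ∀ q ∈ s, u q = v q) {p : ℝ×ℝ} (hp : p ∈ s) : pd1 u p = pd1 v p := by
  have hset : IsOpen {t : ℝ | (t, p.2) ∈ s} := hs.preimage (continuous_id.prodMk continuous_const)
  have : (fun t => u (t, p.2)) =ᶠ[𝓝 p.1] (fun t => v (t, p.2)) := by
    filter_upwards [hset.mem_nhds (by simpa using hp)] with t ht using h _ ht
  exact this.deriv_eq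

lemma pd2_congr_on {s : Set (ℝ×ℝ)} (hs : IsOpen s) {u v : ℝ×ℝ → ℝ}
    (h : ∀ q ∈ s, u q = v q) {p : ℝ×ℝ} (hp : p ∈ s) : pd2 u p = pd2 v p := by
  have hset : IsOpen {t : ℝ | (p.1, t) ∈ s} := hs.preimage (continuous_const.prodMk continuous_id)
  have : (fun t => u (p.1, t)) =ᶠ[𝓝 p.2] (fun t => v (p.1, t)) := by
    filter_upwards [hset.mem_nhds (by simpa using hp)] with t ht using h _ ht
  exact this.deriv_eq

lemma hasDerivAt_slice1 {X : ℝ×ℝ → ℝ} {p : ℝ×ℝ} (hX : DifferentiableAt ℝ X p) :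
    HasDerivAt (fun t => X (t, p.2)) (fderiv ℝ X p (1, 0)) p.1 := by
  have h1 : HasDerivAt (fun t : ℝ => (t, p.2)) ((1:ℝ), (0:ℝ)) p.1 :=
    (hasDerivAt_id p.1).prodMk (hasDerivAt_const p.1 p.2)
  have := hX.hasFDerivAt.comp_hasDerivAt p.1 (by simpa using h1)
  simpa [Function.comp_def] using this

lemma hasDerivAt_slice2 {X : ℝ×ℝ → ℝ} {p : ℝ×ℝ} (hX : DifferentiableAt ℝ X p) :
    HasDerivAt (fun t => X (p.1, t)) (fderiv ℝ X p (0, 1)) p.2 := by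
  have h1 : HasDerivAt (fun t : ℝ => (p.1, t)) ((0:ℝ), (1:ℝ)) p.2 :=
    (hasDerivAt_const p.2 p.1).prodMk (hasDerivAt_id p.2)
  have := hX.hasFDerivAt.comp_hasDerivAt p.2 (by simpa using h1)
  simpa [Function.comp_def] using this

lemma pd1_eq_fderiv {X : ℝ×ℝ → ℝ} {p : ℝ×ℝ} (hX : DifferentiableAt ℝ X p) :
    pd1 X p = fderiv ℝ X p (1, 0) := (hasDerivAt_slice1 hX).deriv

lemma pd2_eq_fderiv {X : ℝ×ℝ → ℝ} {p : ℝ×ℝ} (hX : DifferentiableAt ℝ X p) :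
    pd2 X p = fderiv ℝ X p (0, 1) := (hasDerivAt_slice2 hX).deriv

lemma pd1iter_congr_on {s : Set (ℝ×ℝ)} (hs : IsOpen s) {u v : ℝ×ℝ → ℝ}
    (h : ∀ q ∈ s, u q = v q) (i : ℕ) : ∀ p ∈ s, pd1^[i] u p = pd1^[i] v p := by
  induction i with
  | zero => exact h
  | succ i ih =>
      intro p hp
      rw [Function.iterate_succ_apply', Function.iterate_succ_apply']
      exact pd1_congr_on hs ih hp

/-- the list of "bumped" lists: differentiate one factor -/
def bumps : List ℕ → List (List ℕ)
  | [] => []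
  | k :: L => ((k+1) :: L) :: (bumps L).map (k :: ·)

lemma bumps_sum_length {L' L : List ℕ} (h : L' ∈ bumps L) :
    L'.sum = L.sum + 1 ∧ L'.length = L.length := by
  induction L generalizing L' with
  | nil => simp [bumps] at h
  | cons k L ih =>
      rcases List.mem_cons.1 h with rfl | h
      · simp [List.sum_cons]; omega
      · rcases List.mem_map.1 h with ⟨L'', hL'', rfl⟩
        obtain ⟨h1, h2⟩ := ih hL''
        constructor <;> simp [List.sum_cons, h1, h2] <;> omega

lemma bumps_mem_ge {L' L : List ℕ} (h : L' ∈ bumps L) (hL : ∀ k ∈ L, 1 ≤ k) :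
    ∀ k ∈ L', 1 ≤ k := by
  induction L generalizing L' with
  | nil => simp [bumps] at h
  | cons k L ih =>
      rcases List.mem_cons.1 h with rfl | h
      · intro k' hk'
        rcases List.mem_cons.1 hk' with rfl | hk'
        · omega
        · exact hL k' (List.mem_cons_of_mem _ hk')
      · rcases List.mem_map.1 h with ⟨L'', hL'', rfl⟩
        intro k' hk'
        rcases List.mem_cons.1 hk' with rfl | hk'
        · exact hL k' (List.mem_cons_self)
        · exact ih hL'' (fun x hx => hL x (List.mem_cons_of_mem _ hx)) k' hk'

def tval (Y : ℝ×ℝ→ℝ) (g : ℝ→ℝ) (τ : ℕ × ℕ × List ℕ) (p : ℝ×ℝ) : ℝ :=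
  pderiv2 τ.1 τ.2.1 Y (p.1, p.2 + g p.1) * (τ.2.2.map (fun k => iteratedDeriv k g p.1)).prod

def stepTerms (τ : ℕ × ℕ × List ℕ) : List (ℕ × ℕ × List ℕ) :=
  (τ.1 + 1, τ.2.1, τ.2.2) :: (τ.1, τ.2.1 + 1, 1 :: τ.2.2) ::
    (bumps τ.2.2).map (fun L => (τ.1, τ.2.1, L))

lemma hasDerivAt_list_sum {ι : Type*} (l : List ι) (f : ι → ℝ → ℝ) (f' : ι → ℝ) (x : ℝ)
    (h : ∀ i ∈ l, HasDerivAt (f i) (f' i) x) :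
    HasDerivAt (fun t => (l.map (fun i => f i t)).sum) ((l.map f').sum) x := by
  induction l with
  | nil => simpa using hasDerivAt_const x (0:ℝ)
  | cons a l ih =>
      have := (h a (List.mem_cons_self)).add (ih (fun i hi => h i (List.mem_cons_of_mem _ hi)))
      simp only [List.map_cons, List.sum_cons]; exact this

lemma list_le_sum_of_mem_ge {m : ℕ} {L : List ℕ} (h : ∀ k ∈ L, m ≤ k) :
    m * L.length ≤ L.sum := by
  induction L with
  | nil => simp
  | cons k L ih =>
      simp only [List.length_cons, List.sum_cons]
      have h1 := h k (List.mem_cons_self)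
      have h2 := ih (fun x hx => h x (List.mem_cons_of_mem _ hx))
      rw [Nat.mul_succ]; omega

lemma sum_map_flatMap {I I' : Type*} (terms : List I) (f : I' → ℝ) (s : I → List I') :
    ((terms.flatMap s).map f).sum = (terms.map (fun τ => ((s τ).map f).sum)).sum := by
  induction terms with
  | nil => simp
  | cons t ts ih => simp [List.flatMap_cons, ih]

lemma stepTerms_ge_one {τ τ' : ℕ × ℕ × List ℕ} (h : τ' ∈ stepTerms τ)
    (hτ : ∀ k ∈ τ.2.2, 1 ≤ k) : ∀ k ∈ τ'.2.2, 1 ≤ k := by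
  obtain ⟨i, j, L⟩ := τ
  rcases List.mem_cons.1 h with rfl | h
  · exact hτ
  rcases List.mem_cons.1 h with rfl | h
  · intro k hk
    rcases List.mem_cons.1 hk with rfl | hk
    · omega
    · exact hτ k hk
  · rcases List.mem_map.1 h with ⟨L', hL', rfl⟩
    exact bumps_mem_ge hL' hτ

lemma stepTerms_weight {m a : ℕ} {τ τ' : ℕ × ℕ × List ℕ} (h : τ' ∈ stepTerms τ)
    (hτ : τ.1 + m * τ.2.1 + τ.2.2.sum = a + m * τ.2.2.length) :
    τ'.1 + m * τ'.2.1 + τ'.2.2.sum = (a+1) + m * τ'.2.2.length := by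
  obtain ⟨i, j, L⟩ := τ
  simp only at hτ
  rcases List.mem_cons.1 h with rfl | h
  · show (i+1) + m * j + L.sum = (a+1) + m * L.length; omega
  rcases List.mem_cons.1 h with rfl | h
  · show i + m * (j+1) + (1 :: L).sum = (a+1) + m * (1 :: L).length
    simp only [List.sum_cons, List.length_cons, Nat.mul_succ]; omega
  · rcases List.mem_map.1 h with ⟨L', hL', rfl⟩
    obtain ⟨h1, h2⟩ := bumps_sum_length (L := L) hL'
    show i + m * j + L'.sum = (a+1) + m * L'.length
    rw [h1, h2]; omega

/-- translating in the second variable commutes with pd2 (globally, no hypotheses) -/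
lemma pd2_shear (F : ℝ×ℝ→ℝ) (g : ℝ→ℝ) :
    ∀ b : ℕ, pd2^[b] (fun q => F (q.1, q.2 + g q.1)) = fun q => (pd2^[b] F) (q.1, q.2 + g q.1) := by
  intro b
  induction b generalizing F with
  | zero => rfl
  | succ b ih =>
      rw [Function.iterate_succ_apply, Function.iterate_succ_apply]
      have h1 : pd2 (fun q => F (q.1, q.2 + g q.1)) = fun q => (pd2 F) (q.1, q.2 + g q.1) := by
        funext p
        show deriv (fun t => F (p.1, t + g p.1)) p.2 = pd2 F (p.1, p.2 + g p.1)
        rw [deriv_comp_add_const (fun s => F (p.1, s)) (g p.1)]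
        rfl
      rw [h1]
      exact ih (pd2 F)

/-! ## Convexity lemmas -/

lemma convex_halfplane (u1 u2 cv : ℝ) : Convex ℝ {t : ℝ×ℝ | cv ≤ u1 * t.1 + u2 * t.2} := by
  intro x hx y hy a b ha hb hab
  simp only [Set.mem_setOf_eq] at *
  have h1 : a * cv ≤ a * (u1 * x.1 + u2 * x.2) := mul_le_mul_of_nonneg_left hx ha
  have h2 : b * cv ≤ b * (u1 * y.1 + u2 * y.2) := mul_le_mul_of_nonneg_left hy hb
  calc cv = a * cv + b * cv := by rw [← add_mul, hab, one_mul]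
    _ ≤ _ := by
        refine le_trans (add_le_add h1 h2) (le_of_eq ?_)
        simp [Prod.fst_add, Prod.snd_add, Prod.smul_fst, Prod.smul_snd, smul_eq_mul]
        ring

lemma mem_NP_of_mem_TS {X : ℝ×ℝ→ℝ} {α : ℕ×ℕ} (hα : α ∈ TaylorSupp X) {z : ℝ×ℝ}
    (h1 : (α.1:ℝ) ≤ z.1) (h2 : (α.2:ℝ) ≤ z.2) : z ∈ NewtonPolyhedron X := by
  apply subset_convexHull
  exact Set.mem_biUnion hα ⟨h1, h2⟩

lemma NP_subset_halfplane {X : ℝ×ℝ→ℝ} {u1 u2 cv : ℝ} (h1 : 0 ≤ u1) (h2 : 0 ≤ u2)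
    (hTS : ∀ α ∈ TaylorSupp X, cv ≤ u1 * (α.1:ℝ) + u2 * (α.2:ℝ)) :
    ∀ z ∈ NewtonPolyhedron X, cv ≤ u1 * z.1 + u2 * z.2 := by
  intro z hz
  have : NewtonPolyhedron X ⊆ {t : ℝ×ℝ | cv ≤ u1 * t.1 + u2 * t.2} := by
    apply convexHull_min _ (convex_halfplane u1 u2 cv)
    intro y hy
    simp only [Set.mem_iUnion] at hy
    obtain ⟨α, hα, hy1, hy2⟩ := hy
    have := hTS α hα
    have b1 : u1 * (α.1:ℝ) ≤ u1 * y.1 := mul_le_mul_of_nonneg_left hy1 h1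
    have b2 : u2 * (α.2:ℝ) ≤ u2 * y.2 := mul_le_mul_of_nonneg_left hy2 h2
    simp only [Set.mem_setOf_eq]
    linarith
  exact this hz

lemma newtonDist_ge {X : ℝ×ℝ→ℝ} (hft : FiniteType X) {u1 u2 cv : ℝ} (h1 : 0 ≤ u1) (h2 : 0 ≤ u2)
    (hu : 0 < u1 + u2)
    (hTS : ∀ α ∈ TaylorSupp X, cv ≤ u1 * (α.1:ℝ) + u2 * (α.2:ℝ)) :
    cv / (u1 + u2) ≤ newtonDist X := by
  apply le_csInf
  · obtain ⟨α, hα⟩ := hft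
    refine ⟨max (α.1:ℝ) (α.2:ℝ), mem_NP_of_mem_TS hα ?_ ?_⟩ <;> simp
  · intro b hb
    have := NP_subset_halfplane h1 h2 hTS _ hb
    simp only at this
    rw [div_le_iff₀ hu]
    nlinarith

section Staircase
variable {n : ℕ} {A B : Fin (n+1) → ℕ}

lemma vertexHull_subset_halfplane {u1 u2 cv : ℝ} (h1 : 0 ≤ u1) (h2 : 0 ≤ u2)
    (hV : ∀ l, cv ≤ u1 * (A l:ℝ) + u2 * (B l:ℝ)) :
    convexHull ℝ (⋃ l : Fin (n+1), {t : ℝ×ℝ | (A l : ℝ) ≤ t.1 ∧ (B l : ℝ) ≤ t.2})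
      ⊆ {t : ℝ×ℝ | cv ≤ u1 * t.1 + u2 * t.2} := by
  apply convexHull_min _ (convex_halfplane u1 u2 cv)
  intro y hy
  simp only [Set.mem_iUnion] at hy
  obtain ⟨l, hy1, hy2⟩ := hy
  have := hV l
  have b1 : u1 * (A l:ℝ) ≤ u1 * y.1 := mul_le_mul_of_nonneg_left hy1 h1
  have b2 : u2 * (B l:ℝ) ≤ u2 * y.2 := mul_le_mul_of_nonneg_left hy2 h2
  simp only [Set.mem_setOf_eq]
  linarith

lemma chord_above {X : ℝ×ℝ→ℝ}
    (hNP : NewtonPolyhedron X =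
      convexHull ℝ (⋃ l : Fin (n+1), {t : ℝ×ℝ | (A l : ℝ) ≤ t.1 ∧ (B l : ℝ) ≤ t.2}))
    (hvert : ∀ l, (((A l : ℝ), (B l : ℝ)) : ℝ × ℝ) ∈
      Set.extremePoints ℝ (NewtonPolyhedron X))
    {l1 l2 l3 : Fin (n+1)} (h12 : (A l1 : ℝ) < A l2) (h23 : (A l2 : ℝ) < A l3) :
    (B l2 : ℝ) ≤ (((A l3:ℝ) - A l2) / ((A l3:ℝ) - A l1)) * B l1
      + (1 - ((A l3:ℝ) - A l2) / ((A l3:ℝ) - A l1)) * B l3 := by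
  set lam : ℝ := ((A l3:ℝ) - A l2) / ((A l3:ℝ) - A l1) with hlam
  have h13 : (0:ℝ) < (A l3:ℝ) - A l1 := by linarith
  have hlam0 : 0 < lam := div_pos (by linarith) h13
  have hlam1 : lam < 1 := by
    rw [hlam, div_lt_one h13]; linarith
  by_contra hgt
  push_neg at hgt
  set β : ℝ := lam * B l1 + (1 - lam) * B l3 with hβ
  set δ : ℝ := (B l2 : ℝ) - β with hδ
  have hδ0 : 0 < δ := by simp [hδ]; linarith
  have hmem : ∀ (l : Fin (n+1)) (h : ℝ), 0 ≤ h → (((A l:ℝ), (B l:ℝ) + h) : ℝ×ℝ) ∈ NewtonPolyhedron X := by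
    intro l h hh
    rw [hNP]
    apply subset_convexHull
    exact Set.mem_iUnion.2 ⟨l, le_refl _, by simp; linarith⟩
  have hconv : Convex ℝ (NewtonPolyhedron X) := by rw [hNP]; exact convex_convexHull ℝ _
  have hA2 : (A l2 : ℝ) = lam * A l1 + (1 - lam) * A l3 := by
    rw [hlam]; field_simp; ring
  have hR : ((( A l2 : ℝ), β) : ℝ×ℝ) ∈ NewtonPolyhedron X := by
    have hin := hconv (hmem l1 0 le_rfl) (hmem l3 0 le_rfl) (le_of_lt hlam0)
      (by linarith : (0:ℝ) ≤ 1 - lam) (by ring)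
    have hpt : ((( A l2 : ℝ), β) : ℝ×ℝ)
        = lam • ((((A l1:ℝ)), (B l1:ℝ) + 0) : ℝ×ℝ) + (1-lam) • ((((A l3:ℝ)), (B l3:ℝ) + 0) : ℝ×ℝ) := by
      simp only [Prod.smul_mk, Prod.mk_add_mk, smul_eq_mul, Prod.mk.injEq]
      exact ⟨by rw [hA2], by rw [hβ]; ring⟩
    rw [hpt]; exact hin
  have hR2 : ((( A l2 : ℝ), β + 2*δ) : ℝ×ℝ) ∈ NewtonPolyhedron X := by
    have hin := hconv (hmem l1 (2*δ) (by linarith)) (hmem l3 (2*δ) (by linarith)) (le_of_lt hlam0)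
      (by linarith : (0:ℝ) ≤ 1 - lam) (by ring)
    have hpt : ((( A l2 : ℝ), β + 2*δ) : ℝ×ℝ)
        = lam • ((((A l1:ℝ)), (B l1:ℝ) + 2*δ) : ℝ×ℝ) + (1-lam) • ((((A l3:ℝ)), (B l3:ℝ) + 2*δ) : ℝ×ℝ) := by
      simp only [Prod.smul_mk, Prod.mk_add_mk, smul_eq_mul, Prod.mk.injEq]
      exact ⟨by rw [hA2], by rw [hβ]; ring⟩
    rw [hpt]; exact hin
  have hseg : (((A l2 : ℝ), (B l2 : ℝ)) : ℝ×ℝ) ∈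
      openSegment ℝ (((A l2 : ℝ), β) : ℝ×ℝ) (((A l2 : ℝ), β + 2*δ) : ℝ×ℝ) := by
    refine ⟨1/2, 1/2, by norm_num, by norm_num, by norm_num, ?_⟩
    simp only [Prod.smul_mk, Prod.mk_add_mk, smul_eq_mul, Prod.mk.injEq]
    exact ⟨by ring, by rw [hδ]; ring⟩
  have hext := (hvert l2).2 hR hR2 hseg
  have : β = (B l2 : ℝ) := congrArg Prod.snd hext
  simp [hδ] at hδ0
  linarith
end Staircase

section Support
variable {n : ℕ} {A B : Fin (n+1) → ℕ} {X : ℝ×ℝ→ℝ}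

/-- each interior edge line supports all vertices -/
lemma edge_supports
    (hNP : NewtonPolyhedron X =
      convexHull ℝ (⋃ l : Fin (n+1), {t : ℝ×ℝ | (A l : ℝ) ≤ t.1 ∧ (B l : ℝ) ≤ t.2}))
    (hvert : ∀ l, (((A l : ℝ), (B l : ℝ)) : ℝ × ℝ) ∈
      Set.extremePoints ℝ (NewtonPolyhedron X))
    (hAmono : StrictMono A) {jj : Fin n} {s t : ℝ} (hs : 0 < s) (ht : 0 < t)
    (he1 : s * (A jj.castSucc : ℝ) + t * (B jj.castSucc : ℝ) = 1)
    (he2 : s * (A jj.succ : ℝ) + t * (B jj.succ : ℝ) = 1) :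
    ∀ l, 1 ≤ s * (A l : ℝ) + t * (B l : ℝ) := by
  intro l
  have hAcs : (A jj.castSucc : ℝ) < A jj.succ := by
    exact_mod_cast hAmono (Fin.castSucc_lt_succ (i := jj))
  rcases lt_trichotomy l jj.castSucc with hlt | rfl | hgt
  · have h12 : (A l : ℝ) < A jj.castSucc := by exact_mod_cast hAmono hlt
    have hch := chord_above hNP hvert h12 hAcs
    set lam : ℝ := ((A jj.succ:ℝ) - A jj.castSucc) / ((A jj.succ:ℝ) - A l) with hlam
    have hden : (0:ℝ) < (A jj.succ:ℝ) - A l := by linarith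
    have hlam0 : 0 < lam := div_pos (by linarith) hden
    have hlam1 : lam < 1 := by rw [hlam, div_lt_one hden]; linarith
    have hA2 : (A jj.castSucc : ℝ) = lam * A l + (1 - lam) * A jj.succ := by
      rw [hlam]; field_simp; ring
    by_contra hbad
    push_neg at hbad
    have hBle : t * (B jj.castSucc:ℝ) ≤ t * (lam * B l + (1 - lam) * B jj.succ) :=
      mul_le_mul_of_nonneg_left hch ht.le
    have hexp : s * (A jj.castSucc:ℝ) + t * (lam * (B l:ℝ) + (1 - lam) * B jj.succ)
        = lam * (s * A l + t * B l) + (1 - lam) * (s * A jj.succ + t * B jj.succ) := by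
      rw [hA2]; ring
    have h3 : (1 - lam) * (s * (A jj.succ:ℝ) + t * (B jj.succ:ℝ)) = (1 - lam) * 1 := by rw [he2]
    have hstep : (1:ℝ) ≤ lam * (s * A l + t * B l) + (1 - lam) := by
      linarith [hBle, hexp, he1, h3]
    have : lam * (s * (A l:ℝ) + t * B l) < lam * 1 := mul_lt_mul_of_pos_left hbad hlam0
    linarith
  · linarith [he1]
  · rcases (Fin.castSucc_lt_iff_succ_le.1 hgt).lt_or_eq with hlt | heq
    · have h23 : (A jj.succ : ℝ) < A l := by exact_mod_cast hAmono hlt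
      have hch := chord_above hNP hvert hAcs h23
      set lam : ℝ := ((A l:ℝ) - A jj.succ) / ((A l:ℝ) - A jj.castSucc) with hlam
      have hden : (0:ℝ) < (A l:ℝ) - A jj.castSucc := by linarith
      have hlam0 : 0 < lam := div_pos (by linarith) hden
      have hlam1 : lam < 1 := by rw [hlam, div_lt_one hden]; linarith
      have hA2 : (A jj.succ : ℝ) = lam * A jj.castSucc + (1 - lam) * A l := by
        rw [hlam]; field_simp; ring
      by_contra hbad
      push_neg at hbad
      have hBle : t * (B jj.succ:ℝ) ≤ t * (lam * B jj.castSucc + (1 - lam) * B l) :=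
        mul_le_mul_of_nonneg_left hch ht.le
      have hexp : s * (A jj.succ:ℝ) + t * (lam * (B jj.castSucc:ℝ) + (1 - lam) * B l)
          = lam * (s * A jj.castSucc + t * B jj.castSucc) + (1 - lam) * (s * A l + t * B l) := by
        rw [hA2]; ring
      have h3 : lam * (s * (A jj.castSucc:ℝ) + t * (B jj.castSucc:ℝ)) = lam * 1 := by rw [he1]
      have hstep : (1:ℝ) ≤ lam + (1 - lam) * (s * (A l:ℝ) + t * B l) := by
        linarith [hBle, hexp, he2, h3]
      have : (1 - lam) * (s * (A l:ℝ) + t * B l) < (1 - lam) * 1 :=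
        mul_lt_mul_of_pos_left hbad (by linarith)
      linarith
    · rw [← heq]; linarith [he2]
end Support

/-- the elementary inequality -/
lemma elem_bound (m : ℕ) (hm : 2 ≤ m) (s t cs d : ℝ) (hs : 0 < s) (hst : (m:ℝ)*s < t)
    (hmc : (m:ℝ) ≤ cs * t) (hcs2 : cs ≤ 2*(m:ℝ)+1) (hd1 : 1 ≤ d)
    (hdc : cs ≤ ((m:ℝ)+1) * d) :
    (1 + (m:ℝ)*s - t)/(s+t) ≤ d := by
  have hmr : (2:ℝ) ≤ (m:ℝ) := by exact_mod_cast hm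
  have ht0 : 0 < t := lt_of_le_of_lt (by positivity) hst
  have hst0 : 0 < s + t := by linarith
  have hcs0 : 0 < cs := by nlinarith
  rcases le_or_gt cs ((m:ℝ)+1) with hle | hgt
  · have hcst : cs * t ≤ ((m:ℝ)+1) * t := mul_le_mul_of_nonneg_right hle ht0.le
    have hkey : (1 + (m:ℝ)*s - t) ≤ (s+t) * 1 := by
      nlinarith [mul_nonneg (by linarith : (0:ℝ) ≤ (m:ℝ)-1) (by linarith : (0:ℝ) ≤ t - (m:ℝ)*s)]
    calc (1 + (m:ℝ)*s - t)/(s+t) ≤ 1 := by rw [div_le_one hst0]; linarith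
      _ ≤ d := hd1
  · have hkey : ((m:ℝ)+1) * (1 + (m:ℝ)*s - t) ≤ cs * (s+t) := by
      nlinarith [mul_nonneg (by linarith : (0:ℝ) ≤ t - (m:ℝ)*s)
        (by nlinarith : (0:ℝ) ≤ (m:ℝ)*((m:ℝ)+1) - cs)]
    rw [div_le_iff₀ hst0]
    have hm1 : (0:ℝ) < (m:ℝ)+1 := by linarith
    rw [← mul_le_mul_iff_of_pos_left hm1]
    calc ((m:ℝ)+1) * (1 + (m:ℝ)*s - t) ≤ cs * (s+t) := hkey
      _ ≤ (((m:ℝ)+1) * d) * (s+t) := mul_le_mul_of_nonneg_right hdc hst0.le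
      _ = ((m:ℝ)+1) * (d * (s+t)) := by ring

/-! ## Finite-order versions -/

abbrev CDn {E : Type*} [NormedAddCommGroup E] [NormedSpace ℝ E] (N : ℕ) (f : E → ℝ)
    (s : Set E) : Prop :=
  ContDiffOn ℝ (N : WithTop ℕ∞) f s

lemma cd_mono {E : Type*} [NormedAddCommGroup E] [NormedSpace ℝ E] {f : E → ℝ} {s : Set E}
    {a b : ℕ} (h : CDn b f s) (hab : a ≤ b) : CDn a f s :=
  ContDiffOn.of_le h (by exact_mod_cast hab)

lemma nat_le_infty (N : ℕ) : ((N : ℕ) : WithTop ℕ∞) ≤ ((⊤ : ℕ∞) : WithTop ℕ∞) := by exact_mod_cast le_top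

lemma nat_ne_infty (N : ℕ) :
    ((N : ℕ) : WithTop ℕ∞) = ((⊤ : ℕ∞) : WithTop ℕ∞) →
      ((⊤ : ℕ∞) : WithTop ℕ∞) = (⊤ : WithTop ℕ∞) := by
  intro h; exact absurd h (by simp)

lemma diffAt_f {s : Set (ℝ×ℝ)} (hs : IsOpen s) {X : ℝ×ℝ → ℝ} {N : ℕ}
    (hX : CDn N X s) (hN : 1 ≤ N) {p : ℝ×ℝ} (hp : p ∈ s) : DifferentiableAt ℝ X p :=
  (ContDiffOn.differentiableOn (cd_mono hX hN : CDn 1 X s) (by norm_num)).differentiableAt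
    (hs.mem_nhds hp)

lemma pd1_cd {s : Set (ℝ×ℝ)} (hs : IsOpen s) {X : ℝ×ℝ → ℝ} {N : ℕ}
    (hX : CDn (N+1) X s) : CDn N (pd1 X) s := by
  have h1 : ContDiffOn ℝ (N : WithTop ℕ∞) (fun p => fderiv ℝ X p ((1:ℝ), (0:ℝ))) s :=
    (ContDiffOn.fderiv_of_isOpen hX hs (Nat.cast_succ N).ge).clm_apply contDiffOn_const
  exact h1.congr (fun p hp => pd1_eq_fderiv (diffAt_f hs hX (by omega) hp))

lemma pd2_cd {s : Set (ℝ×ℝ)} (hs : IsOpen s) {X : ℝ×ℝ → ℝ} {N : ℕ}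
    (hX : CDn (N+1) X s) : CDn N (pd2 X) s := by
  have h1 : ContDiffOn ℝ (N : WithTop ℕ∞) (fun p => fderiv ℝ X p ((0:ℝ), (1:ℝ))) s :=
    (ContDiffOn.fderiv_of_isOpen hX hs (Nat.cast_succ N).ge).clm_apply contDiffOn_const
  exact h1.congr (fun p hp => pd2_eq_fderiv (diffAt_f hs hX (by omega) hp))

lemma clairaut_f {s : Set (ℝ×ℝ)} (hs : IsOpen s) {X : ℝ×ℝ → ℝ} {N : ℕ}
    (hX : CDn N X s) (hN : 2 ≤ N) {p : ℝ×ℝ} (hp : p ∈ s) :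
    pd1 (pd2 X) p = pd2 (pd1 X) p := by
  have hX2 : CDn 2 X s := cd_mono hX hN
  set f' : ℝ×ℝ → (ℝ×ℝ) →L[ℝ] ℝ := fderiv ℝ X with hf'
  have hf'cd : ContDiffOn ℝ ((1:ℕ) : WithTop ℕ∞) f' s :=
    ContDiffOn.fderiv_of_isOpen hX2 hs (Nat.cast_succ 1).ge
  have hf'diff : DifferentiableAt ℝ f' p :=
    (hf'cd.differentiableOn (by norm_num)).differentiableAt (hs.mem_nhds hp)
  have hev : ∀ᶠ y in 𝓝 p, HasFDerivAt X (f' y) y := by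
    filter_upwards [hs.mem_nhds hp] with y hy using (diffAt_f hs hX (by omega) hy).hasFDerivAt
  have hsymm := second_derivative_symmetric_of_eventually hev hf'diff.hasFDerivAt
  have key : ∀ v w : ℝ×ℝ, fderiv ℝ (fun q => f' q w) p v = fderiv ℝ f' p v w := by
    intro v w
    rw [fderiv_clm_apply hf'diff (differentiableAt_const w)]
    simp
  have e1 : pd1 (pd2 X) p = fderiv ℝ f' p (1,0) (0,1) := by
    have hcongr : pd1 (pd2 X) p = pd1 (fun q => f' q (0,1)) p :=
      pd1_congr_on hs (fun q hq => pd2_eq_fderiv (diffAt_f hs hX (by omega) hq)) hp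
    rw [hcongr, pd1_eq_fderiv (hf'diff.clm_apply (differentiableAt_const _)), key]
  have e2 : pd2 (pd1 X) p = fderiv ℝ f' p (0,1) (1,0) := by
    have hcongr : pd2 (pd1 X) p = pd2 (fun q => f' q (1,0)) p :=
      pd2_congr_on hs (fun q hq => pd1_eq_fderiv (diffAt_f hs hX (by omega) hq)) hp
    rw [hcongr, pd2_eq_fderiv (hf'diff.clm_apply (differentiableAt_const _)), key]
  rw [e1, e2, hsymm (0,1) (1,0)]

lemma pd2iter_cd {s : Set (ℝ×ℝ)} (hs : IsOpen s) :
    ∀ (j K : ℕ) {X : ℝ×ℝ → ℝ}, CDn (K+j) X s → CDn K (pd2^[j] X) s := by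
  intro j; induction j with
  | zero => intro K X hX; exact hX
  | succ j ih =>
      intro K X hX
      rw [Function.iterate_succ_apply']
      exact pd2_cd hs (ih (K+1) (by rw [show K + 1 + j = K + (j+1) by omega]; exact hX))

lemma pd1iter_cd {s : Set (ℝ×ℝ)} (hs : IsOpen s) :
    ∀ (i K : ℕ) {X : ℝ×ℝ → ℝ}, CDn (K+i) X s → CDn K (pd1^[i] X) s := by
  intro i; induction i with
  | zero => intro K X hX; exact hX
  | succ i ih =>
      intro K X hX
      rw [Function.iterate_succ_apply']
      exact pd1_cd hs (ih (K+1) (by rw [show K + 1 + i = K + (i+1) by omega]; exact hX))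

lemma pderiv2_cd {s : Set (ℝ×ℝ)} (hs : IsOpen s) {X : ℝ×ℝ → ℝ} (N i j : ℕ)
    (hX : CDn (N+i+j) X s) : CDn N (pderiv2 i j X) s :=
  pd1iter_cd hs i N (pd2iter_cd hs j (N+i) hX)

lemma pd2_pd1iter_f {s : Set (ℝ×ℝ)} (hs : IsOpen s) :
    ∀ (i : ℕ) {X : ℝ×ℝ → ℝ}, CDn (i+2) X s →
      ∀ p ∈ s, pd2 (pd1^[i] X) p = pd1^[i] (pd2 X) p := by
  intro i
  induction i with
  | zero => intro X _ p _; rfl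
  | succ i ih =>
      intro X hX p hp
      rw [show i + 1 + 2 = (i + 2) + 1 by omega] at hX
      rw [Function.iterate_succ_apply]
      have step1 : pd2 (pd1^[i] (pd1 X)) p = pd1^[i] (pd2 (pd1 X)) p :=
        ih (pd1_cd hs hX) p hp
      rw [step1, Function.iterate_succ_apply]
      exact pd1iter_congr_on hs (fun q hq => (clairaut_f hs hX (by omega) hq).symm) i p hp

lemma pd2_pderiv2_f {s : Set (ℝ×ℝ)} (hs : IsOpen s) {X : ℝ×ℝ → ℝ} (i j : ℕ)
    (hX : CDn (i+j+2) X s) {p : ℝ×ℝ} (hp : p ∈ s) :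
    pd2 (pderiv2 i j X) p = pderiv2 i (j+1) X p := by
  have h2 : CDn (i+2) (pd2^[j] X) s :=
    pd2iter_cd hs j (i+2) (by rw [show i + 2 + j = i + j + 2 by omega]; exact hX)
  have := pd2_pd1iter_f hs i h2 p hp
  unfold pderiv2
  rw [this, Function.iterate_succ_apply']

lemma gder_cd {U : Set ℝ} (hU : IsOpen U) {g : ℝ → ℝ} :
    ∀ (k N : ℕ), CDn (N+k) g U → CDn N (iteratedDeriv k g) U := by
  intro k; induction k with
  | zero => intro N hg; rw [iteratedDeriv_zero]; exact hg
  | succ k ih =>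
      intro N hg
      rw [iteratedDeriv_succ]
      exact ContDiffOn.deriv_of_isOpen
        (ih (N+1) (by rw [show N + 1 + k = N + (k+1) by omega]; exact hg)) hU (Nat.cast_succ N).ge

lemma gder_hasDerivAt_f {U : Set ℝ} (hU : IsOpen U) {g : ℝ → ℝ} (k : ℕ) {x : ℝ}
    (hg : CDn (k+1) g U) (hx : x ∈ U) :
    HasDerivAt (iteratedDeriv k g) (iteratedDeriv (k+1) g x) x := by
  rw [iteratedDeriv_succ]
  have h1 : CDn 1 (iteratedDeriv k g) U :=
    gder_cd hU k 1 (by rw [show 1 + k = k + 1 by omega]; exact hg)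
  exact ((ContDiffOn.differentiableOn h1 (by norm_num)).differentiableAt
    (hU.mem_nhds hx)).hasDerivAt

lemma hasDerivAt_gprod_f {U : Set ℝ} (hU : IsOpen U) {g : ℝ → ℝ} {K : ℕ}
    (hg : CDn K g U) (L : List ℕ) (hL : ∀ k ∈ L, k + 1 ≤ K) {x : ℝ} (hx : x ∈ U) :
    HasDerivAt (fun t => (L.map (fun k => iteratedDeriv k g t)).prod)
      (((bumps L).map (fun L' => (L'.map (fun k => iteratedDeriv k g x)).prod)).sum) x := by
  induction L with
  | nil => simpa [bumps] using hasDerivAt_const x (1:ℝ)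
  | cons k L ih =>
      have h1 : HasDerivAt (fun t => iteratedDeriv k g t *
          (L.map (fun k => iteratedDeriv k g t)).prod)
          (iteratedDeriv (k+1) g x * (L.map (fun k => iteratedDeriv k g x)).prod +
           iteratedDeriv k g x *
             ((bumps L).map (fun L' => (L'.map (fun k => iteratedDeriv k g x)).prod)).sum) x :=
        (gder_hasDerivAt_f hU k (cd_mono hg (hL k List.mem_cons_self)) hx).mul
          (ih (fun k' hk' => hL k' (List.mem_cons_of_mem _ hk')))
      have : (((bumps (k :: L)).map (fun L' => (L'.map (fun k => iteratedDeriv k g x)).prod)).sum)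
          = iteratedDeriv (k+1) g x * (L.map (fun k => iteratedDeriv k g x)).prod +
            iteratedDeriv k g x *
              ((bumps L).map (fun L' => (L'.map (fun k => iteratedDeriv k g x)).prod)).sum := by
        simp only [bumps, List.map_cons, List.sum_cons, List.map_map]
        congr 1
        rw [← List.sum_map_mul_left]
        congr 1
      rw [this]
      simpa using h1

lemma tval_hasDerivAt_f {U : Set ℝ} (hU : IsOpen U) {g : ℝ → ℝ} {K : ℕ} (hg : CDn K g U)
    (hK : 1 ≤ K) {W : Set (ℝ×ℝ)} (hW : IsOpen W) {Y : ℝ×ℝ→ℝ} (τ : ℕ × ℕ × List ℕ)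
    (hY : CDn (τ.1 + τ.2.1 + 2) Y W) (hL : ∀ k ∈ τ.2.2, k + 1 ≤ K) {p : ℝ×ℝ}
    (hpU : p.1 ∈ U) (hpW : (p.1, p.2 + g p.1) ∈ W) :
    HasDerivAt (fun t => tval Y g τ (t, p.2))
      (((stepTerms τ).map (fun τ' => tval Y g τ' p)).sum) p.1 := by
  obtain ⟨i, j, L⟩ := τ
  change CDn (i + j + 2) Y W at hY
  change ∀ k ∈ L, k + 1 ≤ K at hL
  set Z := pderiv2 i j Y with hZ
  set Gp : ℝ×ℝ := (p.1, p.2 + g p.1) with hGp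
  have hgd : HasDerivAt g (deriv g p.1) p.1 :=
    ((ContDiffOn.differentiableOn (cd_mono hg hK : CDn 1 g U) (by norm_num)).differentiableAt
      (hU.mem_nhds hpU)).hasDerivAt
  have hZd : DifferentiableAt ℝ Z Gp :=
    diffAt_f hW (pderiv2_cd hW 1 i j (cd_mono hY (by omega))) le_rfl hpW
  have hinner : HasDerivAt (fun t : ℝ => (t, p.2 + g t)) ((1:ℝ), deriv g p.1) p.1 :=
    (hasDerivAt_id p.1).prodMk ((hgd.const_add p.2))
  have hcomp : HasDerivAt (fun t => Z (t, p.2 + g t)) (fderiv ℝ Z Gp (1, deriv g p.1)) p.1 := by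
    have := hZd.hasFDerivAt.comp_hasDerivAt p.1 hinner
    simpa [Function.comp_def] using this
  have hval : fderiv ℝ Z Gp (1, deriv g p.1) = pd1 Z Gp + pd2 Z Gp * deriv g p.1 := by
    have hvec : ((1:ℝ), deriv g p.1) = ((1:ℝ),(0:ℝ)) + deriv g p.1 • ((0:ℝ),(1:ℝ)) := by
      simp [Prod.ext_iff]
    rw [hvec, map_add, ContinuousLinearMap.map_smul, pd1_eq_fderiv hZd, pd2_eq_fderiv hZd]
    simp [smul_eq_mul]; ring
  rw [hval] at hcomp
  have hprod := hasDerivAt_gprod_f hU hg L hL hpU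
  have hmul := hcomp.mul hprod
  have target_eq : ((stepTerms (i, j, L)).map (fun τ' => tval Y g τ' p)).sum
      = (pd1 Z Gp + pd2 Z Gp * deriv g p.1) * (L.map (fun k => iteratedDeriv k g p.1)).prod
        + Z Gp * ((bumps L).map (fun L' => (L'.map (fun k => iteratedDeriv k g p.1)).prod)).sum := by
    simp only [stepTerms, List.map_cons, List.sum_cons, List.map_map]
    have e1 : tval Y g (i+1, j, L) p = pd1 Z Gp * (L.map (fun k => iteratedDeriv k g p.1)).prod := by
      simp only [tval, hZ]
      congr 2
      unfold pderiv2
      rw [Function.iterate_succ_apply']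
    have e2 : tval Y g (i, j+1, 1 :: L) p
        = pd2 Z Gp * deriv g p.1 * (L.map (fun k => iteratedDeriv k g p.1)).prod := by
      simp only [tval, hZ, List.map_cons, List.prod_cons]
      rw [pd2_pderiv2_f hW i j hY hpW]
      simp [iteratedDeriv_one, hGp]
      ring
    have e3 : (((bumps L).map ((fun τ' => tval Y g τ' p) ∘ (fun L' => (i, j, L')))).sum)
        = Z Gp * ((bumps L).map (fun L' => (L'.map (fun k => iteratedDeriv k g p.1)).prod)).sum := by
      rw [← List.sum_map_mul_left]
      congr 1
    rw [e1, e2, e3]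
    ring
  rw [target_eq]
  exact hmul

lemma mem_len_le_sum {L : List ℕ} (hge : ∀ k ∈ L, 1 ≤ k) {k : ℕ} (hk : k ∈ L) :
    k + L.length ≤ L.sum + 1 := by
  induction L with
  | nil => simp at hk
  | cons x L ih =>
      simp only [List.length_cons, List.sum_cons]
      have hL1 := list_le_sum_of_mem_ge (m := 1) (fun y hy => hge y (List.mem_cons_of_mem _ hy))
      rcases List.mem_cons.1 hk with rfl | hk'
      · omega
      · have := ih (fun y hy => hge y (List.mem_cons_of_mem _ hy)) hk'
        have := hge x List.mem_cons_self
        omega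

lemma term_bounds {a i j : ℕ} {L : List ℕ} (h : i + 1 * j + L.sum = a + 1 * L.length)
    (hge : ∀ k ∈ L, 1 ≤ k) : i + j ≤ a ∧ ∀ k ∈ L, k ≤ a + 1 := by
  have h1 := list_le_sum_of_mem_ge (m := 1) hge
  refine ⟨by omega, fun k hk => ?_⟩
  have := mem_len_le_sum hge hk
  omega

lemma fdb_repr_f {U : Set ℝ} (hU : IsOpen U) {g : ℝ → ℝ} {K : ℕ} (hg : CDn K g U)
    {W : Set (ℝ×ℝ)} (hW : IsOpen W) {Y : ℝ×ℝ→ℝ} (hY : CDn K Y W) (m : ℕ) (a : ℕ)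
    (hK : a + 2 ≤ K) :
    ∃ terms : List (ℕ × ℕ × List ℕ),
      (∀ τ ∈ terms, (τ.1 + m * τ.2.1 + τ.2.2.sum = a + m * τ.2.2.length) ∧ (∀ k ∈ τ.2.2, 1 ≤ k) ∧
        (τ.1 + 1 * τ.2.1 + τ.2.2.sum = a + 1 * τ.2.2.length)) ∧
      (∀ p : ℝ×ℝ, p.1 ∈ U → (p.1, p.2 + g p.1) ∈ W →
        pd1^[a] (fun q => Y (q.1, q.2 + g q.1)) p = (terms.map (fun τ => tval Y g τ p)).sum) := by
  induction a with
  | zero =>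
      refine ⟨[(0,0,[])], ?_, ?_⟩
      · intro τ hτ; rcases List.mem_singleton.1 hτ with rfl; simp
      · intro p _ _; simp [tval, pderiv2]
  | succ a ih =>
      obtain ⟨terms, hwt, hval⟩ := ih (by omega)
      refine ⟨terms.flatMap stepTerms, ?_, ?_⟩
      · intro τ' hτ'
        rcases List.mem_flatMap.1 hτ' with ⟨τ, hτ, hmem⟩
        exact ⟨stepTerms_weight hmem (hwt τ hτ).1, stepTerms_ge_one hmem (hwt τ hτ).2.1,
          stepTerms_weight hmem (hwt τ hτ).2.2⟩
      · intro p hpU hpW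
        set Ω : Set (ℝ×ℝ) := {q | q.1 ∈ U ∧ (q.1, q.2 + g q.1) ∈ W} with hΩ
        have hΩopen : IsOpen Ω := by
          have hcont : ContinuousOn (fun q : ℝ×ℝ => (q.1, q.2 + g q.1)) (Prod.fst ⁻¹' U) :=
            continuousOn_fst.prodMk (continuousOn_snd.add
              ((ContDiffOn.continuousOn hg).comp continuousOn_fst (fun q hq => hq)))
          have : Ω = (Prod.fst ⁻¹' U) ∩ ((fun q : ℝ×ℝ => (q.1, q.2 + g q.1)) ⁻¹' W) := by
            ext q; simp [hΩ]
          rw [this]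
          exact hcont.isOpen_inter_preimage (hU.preimage continuous_fst) hW
        have hpΩ : p ∈ Ω := ⟨hpU, hpW⟩
        rw [Function.iterate_succ_apply']
        have hcongr : pd1 (pd1^[a] (fun q => Y (q.1, q.2 + g q.1))) p
            = pd1 (fun q => (terms.map (fun τ => tval Y g τ q)).sum) p :=
          pd1_congr_on hΩopen (fun q hq => hval q hq.1 hq.2) hpΩ
        rw [hcongr]
        have hder : HasDerivAt (fun t => (terms.map (fun τ => tval Y g τ (t, p.2))).sum)
            ((terms.map (fun τ => ((stepTerms τ).map (fun τ' => tval Y g τ' p)).sum)).sum) p.1 :=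
          hasDerivAt_list_sum terms (fun τ t => tval Y g τ (t, p.2)) _ p.1
            (fun τ hτ => by
              obtain ⟨_, hge, h1⟩ := hwt τ hτ
              obtain ⟨hij, hk⟩ := term_bounds h1 hge
              exact tval_hasDerivAt_f hU hg (by omega) hW τ (cd_mono hY (by omega))
                (fun k hkm => by have := hk k hkm; omega) hpU hpW)
        have : pd1 (fun q => (terms.map (fun τ => tval Y g τ q)).sum) p
            = ((terms.map (fun τ => ((stepTerms τ).map (fun τ' => tval Y g τ' p)).sum)).sum) := by
          unfold pd1
          exact hder.deriv
        rw [this, sum_map_flatMap]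

lemma fdb_vanish_f {U : Set ℝ} (hU : IsOpen U) (hU0 : (0:ℝ) ∈ U) {g : ℝ → ℝ} {cn : ℕ}
    (hg : CDn (cn+2) g U) (hg00 : g 0 = 0)
    {W : Set (ℝ×ℝ)} (hW : IsOpen W) (hW0 : ((0:ℝ),(0:ℝ)) ∈ W) {F : ℝ×ℝ→ℝ}
    (hF : CDn (cn+2) F W) (m : ℕ) (hm : 1 ≤ m)
    (hglow : ∀ k < m, iteratedDeriv k g 0 = 0)
    (hvan : ∀ i j : ℕ, i + m * j < cn → pderiv2 i j F (0,0) = 0) :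
    ∀ a b : ℕ, a + m * b < cn → pderiv2 a b (fun q => F (q.1, q.2 + g q.1)) (0,0) = 0 := by
  intro a b hab
  have hbm : b ≤ m * b := Nat.le_mul_of_pos_left b (by omega)
  have hY : CDn (a+2) (pd2^[b] F) W := pd2iter_cd hW b (a+2) (cd_mono hF (by omega))
  obtain ⟨terms, hwt, hval⟩ := fdb_repr_f hU (cd_mono hg (by omega)) hW hY m a le_rfl
  have h00 : ((0:ℝ),(0:ℝ)).1 ∈ U := hU0
  have h00W : (((0:ℝ),(0:ℝ)).1, ((0:ℝ),(0:ℝ)).2 + g ((0:ℝ),(0:ℝ)).1) ∈ W := by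
    simpa [hg00] using hW0
  have hred : pderiv2 a b (fun q => F (q.1, q.2 + g q.1)) (0,0)
      = pd1^[a] (fun q => (pd2^[b] F) (q.1, q.2 + g q.1)) ((0:ℝ),(0:ℝ)) := by
    unfold pderiv2
    rw [pd2_shear F g b]
  rw [hred, hval ((0:ℝ),(0:ℝ)) h00 h00W]
  have hzero : ∀ τ ∈ terms, tval (pd2^[b] F) g τ ((0:ℝ),(0:ℝ)) = 0 := by
    rintro ⟨i, j, L⟩ hτ
    obtain ⟨hwτ, hgeτ, -⟩ := hwt _ hτ
    simp only at hwτ hgeτ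
    by_cases hex : ∃ k ∈ L, k < m
    · obtain ⟨k, hkL, hkm⟩ := hex
      have : (L.map (fun k => iteratedDeriv k g (((0:ℝ),(0:ℝ)) : ℝ×ℝ).1)).prod = 0 := by
        apply List.prod_eq_zero
        exact List.mem_map.2 ⟨k, hkL, by simpa using hglow k hkm⟩
      unfold tval
      simp only at this ⊢
      rw [this, mul_zero]
    · push_neg at hex
      have hsum : m * L.length ≤ L.sum := list_le_sum_of_mem_ge (fun k hk => hex k hk)
      have hij : i + m * j ≤ a := by omega
      have hijb : i + m * (j + b) < cn := by
        have : i + m * (j + b) = i + m * j + m * b := by ring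
        omega
      have hYz : pderiv2 i j (pd2^[b] F) ((0:ℝ),(0:ℝ)) = 0 := by
        have : pderiv2 i (j+b) F = pderiv2 i j (pd2^[b] F) := by
          unfold pderiv2
          rw [Function.iterate_add_apply]
        rw [← this]
        exact hvan i (j+b) hijb
      unfold tval
      simp only
      rw [show ((0:ℝ) + g 0) = 0 by simp [hg00]]
      rw [hYz, zero_mul]
  have : terms.map (fun τ => tval (pd2^[b] F) g τ ((0:ℝ),(0:ℝ))) = terms.map (fun _ => (0:ℝ)) := by
    apply List.map_congr_left
    exact hzero
  rw [this]
  simp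

end Machinery

/-- Corollary 3.3: if the coordinates are linearly adapted and
`d(φ) < 2`, then `h^r(φ) = d(φ)`, i.e. `p'_c = 2d+2`. -/
theorem statement9
    (φ : ℝ × ℝ → ℝ) (V : Set (ℝ × ℝ)) (hV : V ∈ 𝓝 ((0, 0) : ℝ × ℝ))
    (hφ : ContDiffOn ℝ (⊤ : ℕ∞) φ V) (hφ0 : φ (0, 0) = 0)
    (hgrad1 : pd1 φ (0, 0) = 0) (hgrad2 : pd2 φ (0, 0) = 0)
    (hft : FiniteType φ)
    (hnoadapt : NoAdaptedLinearCoords φ)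
    (hlinadapt : IsLinAdaptedCoords φ)
    (hd2 : newtonDist φ < 2)
    -- the principal root jet ψ(x₁) = c x₁^m + O(x₁^{m+1}), c ≠ 0, m ≥ 2
    (ψ : ℝ → ℝ) (hψ : ContDiffAt ℝ (⊤ : ℕ∞) ψ 0)
    (m : ℕ) (hm : 2 ≤ m) (c : ℝ) (hc : c ≠ 0)
    (hψlow : ∀ k < m, iteratedDeriv k ψ 0 = 0)
    (hψlead : iteratedDeriv m ψ 0 = (m.factorial : ℝ) * c)
    (hadapt : IsAdaptedCoords (fun y : ℝ × ℝ => φ (y.1, y.2 + ψ y.1)))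
    -- the vertices (A_l, B_l) of the Newton polyhedron of φ^a
    (n : ℕ) (A B : Fin (n + 1) → ℕ)
    (hNP : NewtonPolyhedron (fun y : ℝ × ℝ => φ (y.1, y.2 + ψ y.1)) =
      convexHull ℝ (⋃ l : Fin (n + 1), {t : ℝ × ℝ | (A l : ℝ) ≤ t.1 ∧ (B l : ℝ) ≤ t.2}))
    (hAmono : StrictMono A)
    (hvert : ∀ l, (((A l : ℝ), (B l : ℝ)) : ℝ × ℝ) ∈
      Set.extremePoints ℝ (NewtonPolyhedron (fun y : ℝ × ℝ => φ (y.1, y.2 + ψ y.1))))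
    -- the weights κ^l of the edges γ_1, …, γ_n, γ_{n+1}
    (w : Fin (n + 1) → ℝ × ℝ)
    (hwc : ∀ j : Fin n, 0 < (w j.castSucc).1 ∧ 0 < (w j.castSucc).2 ∧
      (w j.castSucc).1 * (A j.castSucc : ℝ) + (w j.castSucc).2 * (B j.castSucc : ℝ) = 1 ∧
      (w j.castSucc).1 * (A j.succ : ℝ) + (w j.castSucc).2 * (B j.succ : ℝ) = 1)
    (hwlast : w (Fin.last n) = (0, 1 / (B (Fin.last n) : ℝ)))
    (hr : ℝ)
    (hhr : hr = max (newtonDist φ)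
      (sSup {h : ℝ | ∃ j : Fin (n + 1), (m : ℝ) * (w j).1 < (w j).2 ∧
        h = (1 + (m : ℝ) * (w j).1 - (w j).2) / ((w j).1 + (w j).2)})) :
    hr = newtonDist φ := by
  classical
  set φa : ℝ × ℝ → ℝ := fun y : ℝ × ℝ => φ (y.1, y.2 + ψ y.1) with hφa_def
  have hψ0 : ψ 0 = 0 := by simpa using hψlow 0 (by omega)
  -- d ≥ 1
  have hTS2 : ∀ α ∈ TaylorSupp φ, (2:ℝ) ≤ 1 * (α.1:ℝ) + 1 * (α.2:ℝ) := by
    rintro ⟨a, b⟩ hα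
    by_contra hlt
    push_neg at hlt
    simp only at hlt
    have hab : a + b ≤ 1 := by
      have : (a:ℝ) + (b:ℝ) < 2 := by linarith
      exact_mod_cast Nat.lt_succ_iff.mp (by exact_mod_cast this)
    have hcase : (a = 0 ∧ b = 0) ∨ (a = 1 ∧ b = 0) ∨ (a = 0 ∧ b = 1) := by omega
    rcases hcase with ⟨rfl, rfl⟩ | ⟨rfl, rfl⟩ | ⟨rfl, rfl⟩
    · exact hα (by simpa [TaylorSupp, pderiv2] using hφ0)
    · exact hα (by simpa [TaylorSupp, pderiv2] using hgrad1)
    · exact hα (by simpa [TaylorSupp, pderiv2] using hgrad2)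
  have hd1 : (1:ℝ) ≤ newtonDist φ := by
    have := newtonDist_ge hft (by norm_num) (by norm_num) (by norm_num) hTS2
    norm_num at this
    exact this
  -- smooth neighborhoods
  obtain ⟨U₀, hU₀, hψU₀⟩ : ∃ u ∈ 𝓝 (0:ℝ), CDn (2*m+4) ψ u :=
    hψ.contDiffOn (nat_le_infty _) (nat_ne_infty _)
  set U : Set ℝ := interior U₀ with hUdef
  have hUopen : IsOpen U := isOpen_interior
  have hU0 : (0:ℝ) ∈ U := mem_interior_iff_mem_nhds.2 hU₀
  have hψU : CDn (2*m+4) ψ U := ContDiffOn.mono hψU₀ interior_subset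
  set W : Set (ℝ×ℝ) := interior V with hWdef
  have hWopen : IsOpen W := isOpen_interior
  have hW0 : ((0:ℝ),(0:ℝ)) ∈ W := mem_interior_iff_mem_nhds.2 hV
  have hφW : CDn (2*m+4) φ W :=
    (ContDiffOn.of_le hφ (nat_le_infty _)).mono interior_subset
  -- φa is smooth near the origin
  set Wa : Set (ℝ×ℝ) := {q : ℝ×ℝ | q.1 ∈ U ∧ (q.1, q.2 + ψ q.1) ∈ W} with hWadef
  have hWaopen : IsOpen Wa := by
    have hcont : ContinuousOn (fun q : ℝ×ℝ => (q.1, q.2 + ψ q.1)) (Prod.fst ⁻¹' U) :=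
      continuousOn_fst.prodMk (continuousOn_snd.add
        ((ContDiffOn.continuousOn hψU).comp continuousOn_fst (fun q hq => hq)))
    have : Wa = (Prod.fst ⁻¹' U) ∩ ((fun q : ℝ×ℝ => (q.1, q.2 + ψ q.1)) ⁻¹' W) := by
      ext q; simp [hWadef]
    rw [this]
    exact hcont.isOpen_inter_preimage (hUopen.preimage continuous_fst) hWopen
  have hWa0 : ((0:ℝ),(0:ℝ)) ∈ Wa := ⟨hU0, by simpa [hψ0] using hW0⟩
  have hφaW : CDn (2*m+4) φa Wa := by
    have hS : ContDiffOn ℝ ((2*m+4 : ℕ) : WithTop ℕ∞) (fun q : ℝ×ℝ => (q.1, q.2 + ψ q.1)) Wa :=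
      contDiffOn_fst.prodMk (contDiffOn_snd.add
        (ContDiffOn.comp hψU contDiffOn_fst (fun q hq => hq.1)))
    exact ContDiffOn.comp hφW hS (fun q hq => hq.2)
  -- the minimum of the weighted functional over the vertices
  have hne : (Finset.univ : Finset (Fin (n+1))).Nonempty := Finset.univ_nonempty
  set cnat : ℕ := Finset.univ.inf' hne (fun l => A l + m * B l) with hcnat
  have hc_le : ∀ l, cnat ≤ A l + m * B l := fun l => Finset.inf'_le _ (Finset.mem_univ l)
  obtain ⟨l0, _, hl0⟩ := Finset.exists_mem_eq_inf' hne (fun l => A l + m * B l)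
  -- Taylor support of φa is above the weighted level cnat
  have hTSa : ∀ α ∈ TaylorSupp φa, (cnat:ℝ) ≤ 1 * (α.1:ℝ) + (m:ℝ) * (α.2:ℝ) := by
    intro α hα
    have hmem : (((α.1:ℝ), (α.2:ℝ)) : ℝ×ℝ) ∈ NewtonPolyhedron φa :=
      mem_NP_of_mem_TS hα le_rfl le_rfl
    rw [hNP] at hmem
    have hVb : ∀ l, (cnat:ℝ) ≤ 1 * (A l:ℝ) + (m:ℝ) * (B l:ℝ) := by
      intro l
      have := hc_le l
      have : (cnat:ℝ) ≤ ((A l + m * B l : ℕ) : ℝ) := by exact_mod_cast this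
      push_cast at this
      linarith
    have := vertexHull_subset_halfplane (A := A) (B := B)
      (by norm_num) (by positivity) hVb hmem
    simpa using this
  have hvanφa : ∀ i j : ℕ, i + m * j < cnat → pderiv2 i j φa (0,0) = 0 := by
    intro i j hij
    by_contra hne0
    have hmem : ((i,j) : ℕ×ℕ) ∈ TaylorSupp φa := hne0
    have h2 := hTSa _ hmem
    simp only [one_mul] at h2
    have : (cnat:ℝ) ≤ ((i + m * j : ℕ) : ℝ) := by push_cast; linarith
    have : cnat ≤ i + m * j := by exact_mod_cast this
    omega
  -- transfer to φ via the inverse shear (Faà di Bruno)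
  have hglow : ∀ k < m, iteratedDeriv k (fun x => -(ψ x)) 0 = 0 := by
    intro k hk
    rw [iteratedDeriv_fun_neg, hψlow k hk, neg_zero]
  have hφeq : (fun q : ℝ×ℝ => φa (q.1, q.2 + (fun x => -(ψ x)) q.1)) = φ := by
    funext q
    show φ (q.1, q.2 + -ψ q.1 + ψ q.1) = φ q
    rw [neg_add_cancel_right]
  obtain ⟨cmin, hcmin_def⟩ : ∃ c : ℕ, c = min cnat (2*m+2) := ⟨_, rfl⟩
  have hvanφ : ∀ a b : ℕ, a + m * b < cmin → pderiv2 a b φ (0,0) = 0 := by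
    intro a b hab
    have hgneg : CDn (2*m+4) (fun x => -(ψ x)) U := ContDiffOn.neg hψU
    have := fdb_vanish_f hUopen hU0 (cd_mono hgneg (by omega)) (by simp [hψ0]) hWaopen hWa0
      (cd_mono hφaW (by omega)) m
      (by omega) hglow (fun i j h => hvanφa i j (by omega)) a b hab
    rwa [hφeq] at this
  have hTSφ : ∀ α ∈ TaylorSupp φ, (cmin:ℝ) ≤ 1 * (α.1:ℝ) + (m:ℝ) * (α.2:ℝ) := by
    rintro ⟨a, b⟩ hα
    by_contra h
    push_neg at h
    simp only [one_mul] at h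
    have : a + m * b < cmin := by
      have : ((a + m * b : ℕ) : ℝ) < cmin := by push_cast; linarith
      exact_mod_cast this
    exact hα (hvanφ a b this)
  have hdc' : (cmin:ℝ) / (1 + (m:ℝ)) ≤ newtonDist φ :=
    newtonDist_ge hft (by norm_num) (by positivity) (by positivity) hTSφ
  have hcs2nat : cnat ≤ 2 * m + 1 := by
    have h1 : (cmin:ℝ) < 2 * (1 + (m:ℝ)) := by
      have hlt := lt_of_le_of_lt hdc' hd2
      rw [div_lt_iff₀ (by positivity)] at hlt
      linarith
    have : cmin < 2 * (1 + m) := by exact_mod_cast h1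
    omega
  have hcs2 : (cnat:ℝ) ≤ 2 * (m:ℝ) + 1 := by exact_mod_cast hcs2nat
  have hdc : (cnat:ℝ) ≤ ((m:ℝ)+1) * newtonDist φ := by
    have hcmin_eq : cmin = cnat := by omega
    rw [hcmin_eq] at hdc'
    rw [div_le_iff₀ (by positivity)] at hdc'
    linarith
  -- B is antitone
  have hBadj : ∀ jj : Fin n, B jj.succ < B jj.castSucc := by
    intro jj
    obtain ⟨hs, ht, he1, he2⟩ := hwc jj
    have hA : (A jj.castSucc:ℝ) < A jj.succ := by
      exact_mod_cast hAmono (Fin.castSucc_lt_succ (i := jj))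
    have : (B jj.succ:ℝ) < B jj.castSucc := by nlinarith
    exact_mod_cast this
  have hBanti : ∀ l : Fin (n+1), B (Fin.last n) ≤ B l := by
    intro l
    have hmono : StrictMono (fun i : Fin (n+1) => OrderDual.toDual (B i)) :=
      Fin.strictMono_iff_lt_succ.2 (fun i => by
        simpa using hBadj i)
    rcases eq_or_lt_of_le (Fin.le_last l) with heq | hlt
    · rw [heq]
    · exact le_of_lt (by simpa using hmono hlt)
  -- the sup is at most d
  have hsup : sSup {h : ℝ | ∃ j : Fin (n + 1), (m : ℝ) * (w j).1 < (w j).2 ∧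
      h = (1 + (m : ℝ) * (w j).1 - (w j).2) / ((w j).1 + (w j).2)} ≤ newtonDist φ := by
    apply Real.sSup_le
    · rintro x ⟨j, hcond, rfl⟩
      rcases Fin.eq_castSucc_or_eq_last j with ⟨jj, rfl⟩ | rfl
      · -- interior edge
        obtain ⟨hs, ht, he1, he2⟩ := hwc jj
        have hsupp := edge_supports hNP hvert hAmono hs ht he1 he2
        have hl0' := hsupp l0
        have hmc : (m:ℝ) ≤ (cnat:ℝ) * (w jj.castSucc).2 := by
          have hcs_eq : (cnat:ℝ) = (A l0:ℝ) + (m:ℝ) * (B l0:ℝ) := by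
            rw [hcnat, hl0]; push_cast; ring
          rw [hcs_eq]
          have hA0 : (0:ℝ) ≤ (A l0:ℝ) := Nat.cast_nonneg _
          nlinarith [mul_le_mul_of_nonneg_right (le_of_lt hcond) hA0,
            mul_le_mul_of_nonneg_left hl0' (by positivity : (0:ℝ) ≤ (m:ℝ))]
        exact elem_bound m hm _ _ (cnat:ℝ) (newtonDist φ) hs hcond hmc hcs2 hd1 hdc
      · -- last (horizontal) edge
        rw [hwlast] at hcond ⊢
        simp only at hcond ⊢
        by_cases hB0 : B (Fin.last n) = 0
        · rw [hB0] at hcond; norm_num at hcond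
        · have hBpos : (0:ℝ) < (B (Fin.last n):ℝ) := by
            have : 0 < B (Fin.last n) := Nat.pos_of_ne_zero hB0
            exact_mod_cast this
          have hBle2 : B (Fin.last n) ≤ 2 := by
            have hmB : m * B (Fin.last n) ≤ cnat := by
              rw [hcnat]
              apply Finset.le_inf'
              intro l _
              calc m * B (Fin.last n) ≤ m * B l := Nat.mul_le_mul_left m (hBanti l)
                _ ≤ A l + m * B l := Nat.le_add_left _ _
            have := le_trans hmB hcs2nat
            nlinarith [hm]
          have hval : (1 + (m:ℝ) * 0 - 1/(B (Fin.last n):ℝ)) / (0 + 1/(B (Fin.last n):ℝ))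
              = (B (Fin.last n):ℝ) - 1 := by
            field_simp
            ring
          rw [hval]
          have : ((B (Fin.last n):ℝ)) ≤ 2 := by exact_mod_cast hBle2
          linarith
    · linarith
  rw [hhr]
  exact max_eq_left hsup
end
end

section
/- Let Q = ∏_{k=1}^n [−R_k, R_k] ⊂ ℝⁿ be a compact cuboid with R_k > 0, let H be a C¹ function on an open neighborhood of Q, and let α, β¹, …, βⁿ ∈ ℝ∖{0}. For real numbers a₁,…,aₙ ∈ ℝ∖{0} and M ∈ ℕ put F(t) := Σ_{l=0}^{M} 2^{iαlt} (H·χ_Q)(2^{β¹l}a₁, …, 2^{βⁿl}aₙ). Then there is a constant C depending on Q and the numbers α and β^k, but not on H, the a_k, M and t, such that |F(t)| ≤ C·‖H‖_{C¹(Q)}/|2^{iαt} − 1| for all t ∈ ℝ, all a₁,…,aₙ ∈ ℝ∖{0} and all M ∈ ℕ. -/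
/-!
Put `q = 2^{iαt}`, a number of modulus one, and `x_l = (2^{β^k l} a_k)_k`. Abel summation
bounds `‖F(t)‖ ‖q - 1‖` by the total variation of `l ↦ (Hχ_Q)(x_l)` plus two boundary values.
Every coordinate of `x_l` is monotone in `l`, so the indices with `x_l ∈ Q` form an interval:
the path enters and leaves `Q` at most once, each time at a cost of at most `sup_Q |H|`, and
while it stays in `Q` the mean value theorem bounds the variation by `sup_Q ‖DH‖` times the
variation of a monotone path inside the box, which is at most `Σ_k 2 R_k`.
-/

open Finset

section AbelSummation

variable {𝕜 E : Type*}

theorem sub_one_smul_sum_range_pow_smul [Ring 𝕜] [AddCommGroup E] [Module 𝕜 E] (q : 𝕜)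
    (g : ℕ → E) (M : ℕ) :
    (q - 1) • ∑ l ∈ range (M + 1), q ^ l • g l =
      q ^ (M + 1) • g M - g 0 - ∑ l ∈ range M, q ^ (l + 1) • (g (l + 1) - g l) := by
  induction M with
  | zero => simp [sub_smul]
  | succ M ih =>
    rw [sum_range_succ, smul_add, ih, sum_range_succ]
    simp only [smul_sub, sub_smul, one_smul]
    simp only [smul_smul, ← pow_succ']
    abel

theorem norm_sum_range_pow_smul_mul_norm_sub_one_le [NormedField 𝕜] [SeminormedAddCommGroup E]
    [NormedSpace 𝕜 E] {q : 𝕜} (hq : ‖q‖ ≤ 1) (g : ℕ → E) (M : ℕ) :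
    ‖∑ l ∈ range (M + 1), q ^ l • g l‖ * ‖q - 1‖ ≤
      ∑ l ∈ range M, ‖g (l + 1) - g l‖ + ‖g 0‖ + ‖g M‖ := by
  have hpow (k : ℕ) (v : E) : ‖q ^ k • v‖ ≤ ‖v‖ := by
    rw [norm_smul, norm_pow]
    exact mul_le_of_le_one_left (norm_nonneg v) (pow_le_one₀ (norm_nonneg q) hq)
  rw [mul_comm, ← norm_smul, sub_one_smul_sum_range_pow_smul]
  calc _ ≤ ‖q ^ (M + 1) • g M‖ + ‖g 0‖ + ‖∑ l ∈ range M, q ^ (l + 1) • (g (l + 1) - g l)‖ :=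
        (norm_sub_le _ _).trans (by gcongr; exact norm_sub_le _ _)
    _ ≤ ‖g M‖ + ‖g 0‖ + ∑ l ∈ range M, ‖g (l + 1) - g l‖ := by
        gcongr
        · exact hpow _ _
        · exact (norm_sum_le _ _).trans (sum_le_sum fun l _ => hpow _ _)
    _ = _ := by ring

end AbelSummation

theorem norm_sum_two_cpow_I_mul_mul_norm_sub_one_le (α t : ℝ) (g : ℕ → ℝ) (M : ℕ) :
    ‖∑ l ∈ range (M + 1), (2 : ℂ) ^ (Complex.I * ((α * (l : ℝ) * t : ℝ) : ℂ)) * (g l : ℂ)‖ *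
        ‖(2 : ℂ) ^ (Complex.I * ((α * t : ℝ) : ℂ)) - 1‖ ≤
      ∑ l ∈ range M, ‖g (l + 1) - g l‖ + ‖g 0‖ + ‖g M‖ := by
  have hq : ‖(2 : ℂ) ^ (Complex.I * ((α * t : ℝ) : ℂ))‖ = 1 := by
    rw [← Complex.ofReal_ofNat, Complex.norm_cpow_eq_rpow_re_of_pos two_pos]
    simp
  have hpow (l : ℕ) : (2 : ℂ) ^ (Complex.I * ((α * (l : ℝ) * t : ℝ) : ℂ)) =
      ((2 : ℂ) ^ (Complex.I * ((α * t : ℝ) : ℂ))) ^ l := by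
    rw [← Complex.cpow_nat_mul]
    push_cast
    ring_nf
  have h := norm_sum_range_pow_smul_mul_norm_sub_one_le hq.le (fun l => (g l : ℂ)) M
  simpa only [smul_eq_mul, ← Complex.ofReal_sub, Complex.norm_real, ← hpow] using h

theorem Monotone.sum_range_ite_sub_le {y : ℕ → ℝ} (hy : Monotone y) {c d : ℝ} (hcd : c ≤ d)
    (M : ℕ) :
    ∑ l ∈ range M, (if y l ∈ Set.Icc c d ∧ y (l + 1) ∈ Set.Icc c d then y (l + 1) - y l else 0)
      ≤ d - c := by
  -- invariant: the first `M` steps climb no further than from `c` up to `min (y M) d`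
  suffices h : ∀ M, ∑ l ∈ range M,
      (if y l ∈ Set.Icc c d ∧ y (l + 1) ∈ Set.Icc c d then y (l + 1) - y l else 0)
        ≤ max 0 (min (y M) d - c) from
    (h M).trans (max_le (sub_nonneg.2 hcd) (by linarith [min_le_right (y M) d]))
  intro M
  induction M with
  | zero => simp
  | succ M ih =>
    rw [sum_range_succ]
    split_ifs with h
    · obtain ⟨⟨hcM, hMd⟩, -, hM1d⟩ := h
      rw [min_eq_left hMd, max_eq_right (sub_nonneg.2 hcM)] at ih
      rw [min_eq_left hM1d]
      linarith [le_max_right 0 (y (M + 1) - c)]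
    · rw [add_zero]
      exact ih.trans (max_le_max le_rfl (by gcongr; exact hy M.le_succ))

theorem sum_range_ite_abs_sub_le_of_monotone_or_antitone {y : ℕ → ℝ}
    (hy : Monotone y ∨ Antitone y) {c d : ℝ} (hcd : c ≤ d) (M : ℕ) :
    ∑ l ∈ range M, (if y l ∈ Set.Icc c d ∧ y (l + 1) ∈ Set.Icc c d then |y (l + 1) - y l| else 0)
      ≤ d - c := by
  rcases hy with hy | hy
  · refine le_of_eq_of_le (sum_congr rfl fun l _ => ?_) (hy.sum_range_ite_sub_le hcd M)
    rw [abs_of_nonneg (sub_nonneg.2 (hy l.le_succ))]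
  · refine le_of_eq_of_le (sum_congr rfl fun l _ => ?_)
      ((hy.neg.sum_range_ite_sub_le (neg_le_neg hcd) M).trans_eq (by ring))
    simp only [Set.neg_mem_Icc_iff, neg_neg, sub_neg_eq_add, neg_add_eq_sub,
      abs_of_nonpos (sub_nonpos.2 (hy (l.le_add_right 1))), neg_sub]

open Classical in
theorem Set.OrdConnected.card_filter_range_not_iff_le_two {I : Set ℕ} (hI : I.OrdConnected)
    (M : ℕ) : #{l ∈ Finset.range M | ¬(l ∈ I ↔ l + 1 ∈ I)} ≤ 2 := by
  have hentry : #{l ∈ Finset.range M | l ∉ I ∧ l + 1 ∈ I} ≤ 1 := by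
    refine Finset.card_le_one.2 fun l hl l' hl' => ?_
    simp only [mem_filter] at hl hl'
    by_contra hne
    rcases lt_or_gt_of_ne hne with h | h
    · exact hl'.2.1 (hI.out hl.2.2 hl'.2.2 ⟨h, l'.le_succ⟩)
    · exact hl.2.1 (hI.out hl'.2.2 hl.2.2 ⟨h, l.le_succ⟩)
  have hexit : #{l ∈ Finset.range M | l ∈ I ∧ l + 1 ∉ I} ≤ 1 := by
    refine Finset.card_le_one.2 fun l hl l' hl' => ?_
    simp only [mem_filter] at hl hl'
    by_contra hne
    rcases lt_or_gt_of_ne hne with h | h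
    · exact hl.2.2 (hI.out hl.2.1 hl'.2.1 ⟨l.le_succ, h⟩)
    · exact hl'.2.2 (hI.out hl'.2.1 hl.2.1 ⟨l'.le_succ, h⟩)
  calc #{l ∈ Finset.range M | ¬(l ∈ I ↔ l + 1 ∈ I)}
      ≤ #({l ∈ Finset.range M | l ∉ I ∧ l + 1 ∈ I} ∪ {l ∈ Finset.range M | l ∈ I ∧ l + 1 ∉ I}) := by
        refine Finset.card_le_card fun l hl => ?_
        simp only [Finset.mem_union, Finset.mem_filter] at hl ⊢
        tauto
    _ ≤ 2 := (Finset.card_union_le _ _).trans (by omega)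

open Classical in
theorem sum_range_norm_indicator_sub_le {E F : Type*} [SeminormedAddCommGroup E]
    [SeminormedAddCommGroup F] {s : Set E} {H : E → F} {A L : ℝ} (hA0 : 0 ≤ A)
    (hA : ∀ x ∈ s, ‖H x‖ ≤ A) (hL : ∀ x ∈ s, ∀ y ∈ s, ‖H y - H x‖ ≤ L * ‖y - x‖)
    {x : ℕ → E} (hx : (x ⁻¹' s).OrdConnected) (M : ℕ) :
    ∑ l ∈ range M, ‖s.indicator H (x (l + 1)) - s.indicator H (x l)‖ ≤
      L * ∑ l ∈ range M, (if x l ∈ s ∧ x (l + 1) ∈ s then ‖x (l + 1) - x l‖ else 0) + 2 * A := by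
  have hterm (l : ℕ) : ‖s.indicator H (x (l + 1)) - s.indicator H (x l)‖ ≤
      L * (if x l ∈ s ∧ x (l + 1) ∈ s then ‖x (l + 1) - x l‖ else 0) +
        if ¬(l ∈ x ⁻¹' s ↔ l + 1 ∈ x ⁻¹' s) then A else 0 := by
    by_cases h0 : x l ∈ s <;> by_cases h1 : x (l + 1) ∈ s <;>
      simp [Set.indicator_of_mem, Set.indicator_of_notMem, h0, h1, hA, hL]
  calc _ ≤ ∑ l ∈ range M, (L * (if x l ∈ s ∧ x (l + 1) ∈ s then ‖x (l + 1) - x l‖ else 0) +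
        if ¬(l ∈ x ⁻¹' s ↔ l + 1 ∈ x ⁻¹' s) then A else 0) := sum_le_sum fun l _ => hterm l
    _ = L * ∑ l ∈ range M, (if x l ∈ s ∧ x (l + 1) ∈ s then ‖x (l + 1) - x l‖ else 0) +
        #{l ∈ range M | ¬(l ∈ x ⁻¹' s ↔ l + 1 ∈ x ⁻¹' s)} * A := by
      rw [sum_add_distrib, ← mul_sum]
      congr 1
      rw [← sum_filter, sum_const, nsmul_eq_mul]
    _ ≤ _ := by
      gcongr
      exact_mod_cast hx.card_filter_range_not_iff_le_two M

open Classical in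
theorem sum_range_ite_norm_sub_le_of_monotone_or_antitone {ι : Type*} [Fintype ι]
    {x : ℕ → ι → ℝ} (hx : ∀ k, Monotone (x · k) ∨ Antitone (x · k)) {c d : ι → ℝ}
    (hcd : ∀ k, c k ≤ d k) (M : ℕ) :
    ∑ l ∈ range M, (if x l ∈ Set.univ.pi (fun k => Set.Icc (c k) (d k)) ∧
        x (l + 1) ∈ Set.univ.pi (fun k => Set.Icc (c k) (d k)) then ‖x (l + 1) - x l‖ else 0)
      ≤ ∑ k, (d k - c k) := by
  have hterm (l : ℕ) : (if x l ∈ Set.univ.pi (fun k => Set.Icc (c k) (d k)) ∧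
        x (l + 1) ∈ Set.univ.pi (fun k => Set.Icc (c k) (d k)) then ‖x (l + 1) - x l‖ else 0) ≤
      ∑ k, if x l k ∈ Set.Icc (c k) (d k) ∧ x (l + 1) k ∈ Set.Icc (c k) (d k)
        then |x (l + 1) k - x l k| else 0 := by
    split_ifs with h
    · simp only [Set.mem_univ_pi] at h
      rw [sum_congr rfl fun k _ => if_pos ⟨h.1 k, h.2 k⟩]
      refine (pi_norm_le_iff_of_nonneg (sum_nonneg fun k _ => abs_nonneg _)).2 fun k => ?_
      exact single_le_sum (f := fun k => |x (l + 1) k - x l k|) (fun k _ => abs_nonneg _)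
        (mem_univ k)
    · exact sum_nonneg fun k _ => by positivity
  calc _ ≤ _ := sum_le_sum fun l _ => hterm l
    _ = ∑ k, ∑ l ∈ range M, if x l k ∈ Set.Icc (c k) (d k) ∧ x (l + 1) k ∈ Set.Icc (c k) (d k)
        then |x (l + 1) k - x l k| else 0 := sum_comm
    _ ≤ _ := sum_le_sum fun k _ =>
      sum_range_ite_abs_sub_le_of_monotone_or_antitone (hx k) (hcd k) M

theorem ordConnected_preimage_univ_pi_Icc {ι : Type*} {x : ℕ → ι → ℝ}
    (hx : ∀ k, Monotone (x · k) ∨ Antitone (x · k)) (c d : ι → ℝ) :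
    (x ⁻¹' Set.univ.pi fun k => Set.Icc (c k) (d k)).OrdConnected := by
  rw [Set.univ_pi_eq_iInter, Set.preimage_iInter]
  exact Set.ordConnected_iInter fun k =>
    (hx k).elim Set.ordConnected_Icc.preimage_mono Set.ordConnected_Icc.preimage_anti

open Classical in
theorem sum_range_norm_indicator_univ_pi_Icc_sub_le {ι F : Type*} [Fintype ι]
    [SeminormedAddCommGroup F] {c d : ι → ℝ} (hcd : ∀ k, c k ≤ d k) {H : (ι → ℝ) → F} {A L : ℝ}
    (hA0 : 0 ≤ A) (hA : ∀ y ∈ Set.univ.pi (fun k => Set.Icc (c k) (d k)), ‖H y‖ ≤ A)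
    (hL0 : 0 ≤ L) (hL : ∀ y ∈ Set.univ.pi (fun k => Set.Icc (c k) (d k)),
      ∀ z ∈ Set.univ.pi (fun k => Set.Icc (c k) (d k)), ‖H z - H y‖ ≤ L * ‖z - y‖)
    {x : ℕ → ι → ℝ} (hx : ∀ k, Monotone (x · k) ∨ Antitone (x · k)) (M : ℕ) :
    ∑ l ∈ range M, ‖(Set.univ.pi fun k => Set.Icc (c k) (d k)).indicator H (x (l + 1)) -
        (Set.univ.pi fun k => Set.Icc (c k) (d k)).indicator H (x l)‖ ≤
      L * ∑ k, (d k - c k) + 2 * A :=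
  (sum_range_norm_indicator_sub_le hA0 hA hL (ordConnected_preimage_univ_pi_Icc hx c d) M).trans
    (by gcongr; exact sum_range_ite_norm_sub_le_of_monotone_or_antitone hx hcd M)

theorem monotone_or_antitone_rpow_mul_natCast_mul {b : ℝ} (hb : 0 ≤ b) (β a : ℝ) :
    Monotone (fun l : ℕ => b ^ (β * l) * a) ∨ Antitone (fun l : ℕ => b ^ (β * l) * a) := by
  have hpow : (fun l : ℕ => b ^ (β * l) * a) = fun l : ℕ => (b ^ β) ^ l * a := by
    ext l
    rw [Real.rpow_mul hb, Real.rpow_natCast]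
  have hb' : 0 ≤ b ^ β := Real.rpow_nonneg hb β
  rw [hpow]
  rcases le_total 1 (b ^ β) with h | h <;> rcases le_total 0 a with ha | ha
  · exact .inl ((pow_right_mono₀ h).mul_const ha)
  · exact .inr ((pow_right_mono₀ h).mul_const_of_nonpos ha)
  · exact .inr ((pow_right_anti₀ hb' h).mul_const ha)
  · exact .inl ((pow_right_anti₀ hb' h).mul_const_of_nonpos ha)

theorem IsCompact.le_biSup_of_continuousOn {α : Type*} [TopologicalSpace α] {s : Set α}
    (hs : IsCompact s) {f : α → ℝ} (hf : ContinuousOn f s) {x : α} (hx : x ∈ s) :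
    f x ≤ ⨆ y ∈ s, f y := by
  refine le_ciSup₂ (f := fun y (_ : y ∈ s) => f y) ((hs.bddAbove_image hf).mono ?_) x hx
  rintro _ ⟨_, ⟨y, rfl⟩, ⟨hy, rfl⟩⟩
  exact ⟨y, hy, rfl⟩

theorem Convex.norm_image_sub_le_biSup_norm_fderiv_mul {E F : Type*} [NormedAddCommGroup E]
    [NormedSpace ℝ E] [NormedAddCommGroup F] [NormedSpace ℝ F] {s U : Set E} {H : E → F}
    (hs : Convex ℝ s) (hs' : IsCompact s) (hU : IsOpen U) (hsU : s ⊆ U) (hH : ContDiffOn ℝ 1 H U)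
    {y z : E} (hy : y ∈ s) (hz : z ∈ s) :
    ‖H z - H y‖ ≤ (⨆ x ∈ s, ‖fderiv ℝ H x‖) * ‖z - y‖ :=
  hs.norm_image_sub_le_of_norm_fderiv_le
    (fun _ hw => (hH.differentiableOn one_ne_zero).differentiableAt (hU.mem_nhds (hsU hw)))
    (fun _ hw => hs'.le_biSup_of_continuousOn
      ((hH.continuousOn_fderiv_of_isOpen hU le_rfl).mono hsU).norm hw) hy hz

theorem statement15_general (n : ℕ) (R : Fin n → ℝ) (hR : ∀ k, 0 < R k)
    (α : ℝ) (β : Fin n → ℝ) :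
    ∃ C : ℝ, 0 < C ∧
      ∀ H : (Fin n → ℝ) → ℝ, ∀ U : Set (Fin n → ℝ), IsOpen U →
        (Set.pi Set.univ fun k => Set.Icc (-(R k)) (R k)) ⊆ U → ContDiffOn ℝ 1 H U →
        ∀ a : Fin n → ℝ, (∀ k, a k ≠ 0) → ∀ M : ℕ, ∀ t : ℝ,
          ‖∑ l ∈ Finset.range (M + 1),
                (2 : ℂ) ^ (Complex.I * ((α * (l : ℝ) * t : ℝ) : ℂ)) *
                  (((Set.pi Set.univ fun k => Set.Icc (-(R k)) (R k)).indicator H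
                      (fun k => (2 : ℝ) ^ (β k * (l : ℝ)) * a k) : ℝ) : ℂ)‖ *
              ‖(2 : ℂ) ^ (Complex.I * ((α * t : ℝ) : ℂ)) - 1‖ ≤
            C * ((⨆ x ∈ (Set.pi Set.univ fun k => Set.Icc (-(R k)) (R k)), |H x|) +
              ⨆ x ∈ (Set.pi Set.univ fun k => Set.Icc (-(R k)) (R k)), ‖fderiv ℝ H x‖) := by
  have hR_sum : 0 ≤ ∑ k, R k := sum_nonneg fun k _ => (hR k).le
  refine ⟨2 * ∑ k, R k + 4, by linarith, ?_⟩
  intro H U hU hQU hH a _ M t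
  set Q := Set.univ.pi fun k => Set.Icc (-(R k)) (R k)
  set S₀ := ⨆ x ∈ Q, |H x|
  set S₁ := ⨆ x ∈ Q, ‖fderiv ℝ H x‖
  have hQ : IsCompact Q := isCompact_univ_pi fun k => isCompact_Icc
  have hS₀ : ∀ y ∈ Q, ‖H y‖ ≤ S₀ := fun y hy =>
    hQ.le_biSup_of_continuousOn (hH.continuousOn.mono hQU).abs hy
  have hS₀_nonneg : 0 ≤ S₀ := Real.iSup_nonneg fun y => Real.iSup_nonneg fun _ => abs_nonneg _
  have hS₁_nonneg : 0 ≤ S₁ := Real.iSup_nonneg fun y => Real.iSup_nonneg fun _ => norm_nonneg _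
  have hG (y : Fin n → ℝ) : ‖Q.indicator H y‖ ≤ S₀ :=
    (norm_indicator_eq_indicator_norm H y).trans_le
      (Set.indicator_apply_le' (hS₀ y) fun _ => hS₀_nonneg)
  have hvar := sum_range_norm_indicator_univ_pi_Icc_sub_le (fun k => neg_le_self (hR k).le)
    hS₀_nonneg hS₀ hS₁_nonneg
    (fun y hy z hz => (convex_pi fun k _ => convex_Icc _ _).norm_image_sub_le_biSup_norm_fderiv_mul
      hQ hU hQU hH hy hz)
    (fun k => monotone_or_antitone_rpow_mul_natCast_mul zero_le_two (β k) (a k)) M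
  calc _ ≤ _ := norm_sum_two_cpow_I_mul_mul_norm_sub_one_le α t _ M
    _ ≤ S₁ * ∑ k, (R k - -R k) + 2 * S₀ + S₀ + S₀ := add_le_add_three hvar (hG _) (hG _)
    _ ≤ _ := by
      simp only [sub_neg_eq_add, sum_add_distrib]
      nlinarith [mul_nonneg hR_sum hS₀_nonneg]

/-- Lemma 7.2: bound for oscillatory sums
`F(t) = Σ_{l=0}^M 2^{iαlt} (Hχ_Q)(2^{β¹l}a₁,…,2^{βⁿl}aₙ)` by
`C ‖H‖_{C¹(Q)} / |2^{iαt} − 1|` (stated in multiplied-out form). -/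
theorem statement15 (n : ℕ) (R : Fin n → ℝ) (hR : ∀ k, 0 < R k)
    (α : ℝ) (hα : α ≠ 0) (β : Fin n → ℝ) (hβ : ∀ k, β k ≠ 0) :
    ∃ C : ℝ, 0 < C ∧
      ∀ H : (Fin n → ℝ) → ℝ, ∀ U : Set (Fin n → ℝ), IsOpen U →
        (Set.pi Set.univ fun k => Set.Icc (-(R k)) (R k)) ⊆ U → ContDiffOn ℝ 1 H U →
        ∀ a : Fin n → ℝ, (∀ k, a k ≠ 0) → ∀ M : ℕ, ∀ t : ℝ,
          ‖∑ l ∈ Finset.range (M + 1),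
                (2 : ℂ) ^ (Complex.I * ((α * (l : ℝ) * t : ℝ) : ℂ)) *
                  (((Set.pi Set.univ fun k => Set.Icc (-(R k)) (R k)).indicator H
                      (fun k => (2 : ℝ) ^ (β k * (l : ℝ)) * a k) : ℝ) : ℂ)‖ *
              ‖(2 : ℂ) ^ (Complex.I * ((α * t : ℝ) : ℂ)) - 1‖ ≤
            C * ((⨆ x ∈ (Set.pi Set.univ fun k => Set.Icc (-(R k)) (R k)), |H x|) +
              ⨆ x ∈ (Set.pi Set.univ fun k => Set.Icc (-(R k)) (R k)), ‖fderiv ℝ H x‖) :=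
  statement15_general n R hR α β
end
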